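/- arXiv:1708.04079 — 5 statements merged into one kernel-verified Lean document; each statement's English description precedes it below -/
import Mathlib

section
/- Let E = V ⊕ V* with the canonical pairing ⟨(x,ξ),(y,η)⟩_E = η(x) + ξ(y), let (d,⟨·,·⟩_d) be a vector space with a nondegenerate symmetric bilinear form, and let g ⊆ d be a maximally isotropic subspace with dim d = 2·dim g. Suppose R: d → E is an injective linear map satisfying ⟨R(x),R(y)⟩_E = −⟨x,y⟩_d for all x,y ∈ d. Let K_d = R(d) and K_g = R(g). Then K_g^⊥ = K_g ⊕ K_d^⊥ (internal direct sum of subspaces of E), where ⊥ denotes orthogonal complement with respect to ⟨·,·⟩_E. -/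
/-!
Since `R` reverses the sign of `Bd`, the image `K_g` is isotropic and, `Bd` being nondegenerate,
`K_d` meets `K_d^⊥` only in `0`. Hence `K_g ⊕ K_d^⊥` lies in `K_g^⊥`, and the two have the same
dimension `dim E - dim g` because the canonical pairing is nondegenerate and `dim d = 2 dim g`.
-/

open Module

namespace LinearMap.BilinForm

section DualPairing

variable {K V : Type*} [Field K] [AddCommGroup V] [Module K V]
  {B : LinearMap.BilinForm K (V × Dual K V)}

theorem isSymm_of_apply_eq_dualPairing (hB : ∀ u w, B u w = u.2 w.1 + w.2 u.1) : B.IsSymm :=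
  ⟨fun u w => by rw [hB, hB, add_comm]⟩

theorem nondegenerate_of_apply_eq_dualPairing (hB : ∀ u w, B u w = u.2 w.1 + w.2 u.1) :
    B.Nondegenerate := by
  refine ((isSymm_of_apply_eq_dualPairing hB).isRefl.nondegenerate_iff_separatingLeft).2 ?_
  intro u hu
  have h_dual : u.2 = 0 := LinearMap.ext fun v => by simpa [hB] using hu (v, 0)
  have h_vec : u.1 = 0 :=
    (forall_dual_apply_eq_zero_iff K u.1).1 fun φ => by simpa [hB] using hu (0, φ)
  exact Prod.ext h_vec h_dual

end DualPairing

variable {K E F : Type*} [Field K] [AddCommGroup E] [Module K E] [AddCommGroup F] [Module K F]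
  {B : LinearMap.BilinForm K E} {Bd : LinearMap.BilinForm K F} {R : F →ₗ[K] E}

theorem range_inf_orthogonal_range_eq_bot (hBd : Bd.SeparatingRight)
    (hR : ∀ x y, B (R x) (R y) = -Bd x y) : range R ⊓ B.orthogonal (range R) = ⊥ := by
  rw [Submodule.eq_bot_iff]
  rintro _ ⟨⟨a, rfl⟩, ha⟩
  have : a = 0 := hBd a fun y => by simpa [hR] using ha (R y) ⟨y, rfl⟩
  rw [this, map_zero]

theorem map_le_orthogonal_map_of_isotropic (hR : ∀ x y, B (R x) (R y) = -Bd x y)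
    {g : Submodule K F} (hg : ∀ x ∈ g, ∀ y ∈ g, Bd x y = 0) :
    g.map R ≤ B.orthogonal (g.map R) := by
  rintro _ ⟨a, ha, rfl⟩ _ ⟨b, hb, rfl⟩
  rw [hR, hg b hb a ha, neg_zero]

theorem orthogonal_eq_sup_orthogonal_of_le_orthogonal [FiniteDimensional K E]
    (hB : B.Nondegenerate) {W U : Submodule K E} (hWU : W ≤ U) (hW : W ≤ B.orthogonal W)
    (hWU_disj : W ⊓ B.orthogonal U = ⊥) (hdim : finrank K U = 2 * finrank K W) :
    B.orthogonal W = W ⊔ B.orthogonal U := by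
  refine (Submodule.eq_of_le_of_finrank_le (sup_le hW (orthogonal_le hWU)) ?_).symm
  have hsup := Submodule.finrank_sup_add_finrank_inf_eq W (B.orthogonal U)
  rw [hWU_disj, finrank_bot, add_zero, finrank_orthogonal hB] at hsup
  rw [finrank_orthogonal hB, hsup]
  have := Submodule.finrank_le U
  omega

end LinearMap.BilinForm

open LinearMap LinearMap.BilinForm

theorem stmt_1_general {V d : Type*} [AddCommGroup V] [Module ℝ V] [FiniteDimensional ℝ V]
    [AddCommGroup d] [Module ℝ d]
    (pE : LinearMap.BilinForm ℝ (V × Module.Dual ℝ V))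
    (hpE : ∀ u w : V × Module.Dual ℝ V, pE u w = u.2 w.1 + w.2 u.1)
    (Bd : LinearMap.BilinForm ℝ d)
    (hnd : Bd.Nondegenerate)
    (g : Submodule ℝ d) (hiso : ∀ x ∈ g, ∀ y ∈ g, Bd x y = 0)
    (hdim : Module.finrank ℝ d = 2 * Module.finrank ℝ g)
    (R : d →ₗ[ℝ] V × Module.Dual ℝ V) (hinj : Function.Injective R)
    (hanti : ∀ x y : d, pE (R x) (R y) = - Bd x y) :
    pE.orthogonal (g.map R) = (g.map R) ⊔ pE.orthogonal (LinearMap.range R)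
      ∧ (g.map R) ⊓ pE.orthogonal (LinearMap.range R) = ⊥ := by
  have hKg_le : g.map R ≤ range R := LinearMap.map_le_range
  have hinf : g.map R ⊓ pE.orthogonal (range R) = ⊥ :=
    eq_bot_mono (inf_le_inf_right _ hKg_le) (range_inf_orthogonal_range_eq_bot hnd.2 hanti)
  refine ⟨orthogonal_eq_sup_orthogonal_of_le_orthogonal (nondegenerate_of_apply_eq_dualPairing hpE)
    hKg_le (map_le_orthogonal_map_of_isotropic hanti hiso) hinf ?_, hinf⟩
  have : FiniteDimensional ℝ d := Module.Finite.of_injective R hinj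
  rw [finrank_range_of_inj hinj, (Submodule.equivMapOfInjective R hinj g).finrank_eq.symm, hdim]

/-- Let `E = V ⊕ V*` with the canonical pairing
`⟨(x,ξ),(y,η)⟩_E = η(x) + ξ(y)`, `(d,⟨·,·⟩_d)` a vector space with a nondegenerate
symmetric bilinear form, and `g ⊆ d` a maximally isotropic subspace with
`dim d = 2 dim g`.  If `R : d → E` is an injective linear anti-isometry, then with
`K_d = R(d)` and `K_g = R(g)` one has the internal direct sum decomposition
`K_g^⊥ = K_g ⊕ K_d^⊥` (orthogonal complements taken with respect to `⟨·,·⟩_E`). -/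
theorem stmt_1 {V d : Type*} [AddCommGroup V] [Module ℝ V] [FiniteDimensional ℝ V]
    [AddCommGroup d] [Module ℝ d] [FiniteDimensional ℝ d]
    (pE : LinearMap.BilinForm ℝ (V × Module.Dual ℝ V))
    (hpE : ∀ u w : V × Module.Dual ℝ V, pE u w = u.2 w.1 + w.2 u.1)
    (Bd : LinearMap.BilinForm ℝ d) (hsymm : ∀ x y : d, Bd x y = Bd y x)
    (hnd : Bd.Nondegenerate)
    (g : Submodule ℝ d) (hiso : ∀ x ∈ g, ∀ y ∈ g, Bd x y = 0)
    (hmax : ∀ h : Submodule ℝ d, (∀ x ∈ h, ∀ y ∈ h, Bd x y = 0) → g ≤ h → h = g)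
    (hdim : Module.finrank ℝ d = 2 * Module.finrank ℝ g)
    (R : d →ₗ[ℝ] V × Module.Dual ℝ V) (hinj : Function.Injective R)
    (hanti : ∀ x y : d, pE (R x) (R y) = - Bd x y) :
    pE.orthogonal (g.map R) = (g.map R) ⊔ pE.orthogonal (LinearMap.range R)
      ∧ (g.map R) ⊓ pE.orthogonal (LinearMap.range R) = ⊥ :=
  stmt_1_general pE hpE Bd hnd g hiso hdim R hinj hanti
end

section
/- Let (d,⟨·,·⟩_d,[·,·]_d) be a quadratic Lie algebra and E ⊆ d a maximal positive definite subspace with orthogonal complement E^⊥. For x ∈ d write x = x_+ + x_− with x_+ ∈ E, x_− ∈ E^⊥. Define ∇⁰ by ⟨∇⁰_x y, z⟩_d = −⟨[x_+,y_−]_d, z_−⟩_d − ⟨[x_−,y_+]_d, z_+⟩_d − (1/3)⟨[x_+,y_+]_d, z_+⟩_d − (1/3)⟨[x_−,y_−]_d, z_−⟩_d. Then ∇⁰ is metric compatible: ⟨∇⁰_x y, z⟩_d + ⟨y, ∇⁰_x z⟩_d = 0 for all x,y,z ∈ d. -/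
/-- On a quadratic Lie algebra `(d,⟨·,·⟩_d,[·,·]_d)` with a
generalized metric (a maximal positive definite subspace `E`, encoded by the
orthogonal projection `pr` onto `E` along `E^⊥`; `x₊ = pr x`, `x₋ = x − pr x`), the
connection `∇⁰` determined by
`⟨∇⁰_x y, z⟩ = −⟨[x₊,y₋],z₋⟩ − ⟨[x₋,y₊],z₊⟩ − (1/3)⟨[x₊,y₊],z₊⟩ − (1/3)⟨[x₋,y₋],z₋⟩`
is metric compatible: `⟨∇⁰_x y, z⟩ + ⟨y, ∇⁰_x z⟩ = 0`. -/
theorem stmt_9 {d : Type*} [LieRing d] [LieAlgebra ℝ d] [FiniteDimensional ℝ d]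
    (B : LinearMap.BilinForm ℝ d)
    (hsymm : ∀ x y : d, B x y = B y x)
    (hnd : B.Nondegenerate)
    (hinv : ∀ x y z : d, B ⁅x, y⁆ z + B y ⁅x, z⁆ = 0)
    (pr : d →ₗ[ℝ] d) (hproj : ∀ x : d, pr (pr x) = pr x)
    (horth : ∀ x y : d, B (pr x) (y - pr y) = 0)
    (hpos : ∀ x : d, pr x = x → x ≠ 0 → 0 < B x x)
    (hneg : ∀ x : d, pr x = 0 → x ≠ 0 → B x x < 0)
    (N : d → d → d)
    (hN : ∀ x y z : d, B (N x y) z =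
      - B ⁅pr x, y - pr y⁆ (z - pr z) - B ⁅x - pr x, pr y⁆ (pr z)
      - (1/3 : ℝ) * B ⁅pr x, pr y⁆ (pr z)
      - (1/3 : ℝ) * B ⁅x - pr x, y - pr y⁆ (z - pr z)) :
    ∀ x y z : d, B (N x y) z + B y (N x z) = 0 := by
  have key : ∀ a b c : d, B ⁅a, b⁆ c + B ⁅a, c⁆ b = 0 := fun a b c => by
    linear_combination hinv a b c - hsymm b ⁅a, c⁆
  intro x y z
  rw [hsymm y (N x z), hN, hN]
  linear_combination -key (pr x) (y - pr y) (z - pr z) - key (x - pr x) (pr y) (pr z)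
    - (1/3 : ℝ) * key (pr x) (pr y) (pr z)
    - (1/3 : ℝ) * key (x - pr x) (y - pr y) (z - pr z)
end

section
/- With ∇⁰ as defined by ⟨∇⁰_x y, z⟩_d = −⟨[x_+,y_−]_d, z_−⟩_d − ⟨[x_−,y_+]_d, z_+⟩_d − (1/3)⟨[x_+,y_+]_d, z_+⟩_d − (1/3)⟨[x_−,y_−]_d, z_−⟩_d on a quadratic Lie algebra d with generalized metric E ⊆ d, the torsion with respect to the bracket −[·,·]_d vanishes: T(x,y,z) := ⟨∇⁰_x y − ∇⁰_y x + [x,y]_d, z⟩_d + ⟨∇⁰_z x, y⟩_d = 0 for all x,y,z ∈ d. -/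
/-- With `∇⁰` as defined on a quadratic Lie algebra `d` with
generalized metric `E`, the torsion with respect to the bracket `−[·,·]_d` vanishes:
`T(x,y,z) = ⟨∇⁰_x y − ∇⁰_y x + [x,y], z⟩ + ⟨∇⁰_z x, y⟩ = 0`. -/
theorem stmt_10 {d : Type*} [LieRing d] [LieAlgebra ℝ d] [FiniteDimensional ℝ d]
    (B : LinearMap.BilinForm ℝ d)
    (hsymm : ∀ x y : d, B x y = B y x)
    (hnd : B.Nondegenerate)
    (hinv : ∀ x y z : d, B ⁅x, y⁆ z + B y ⁅x, z⁆ = 0)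
    (pr : d →ₗ[ℝ] d) (hproj : ∀ x : d, pr (pr x) = pr x)
    (horth : ∀ x y : d, B (pr x) (y - pr y) = 0)
    (hpos : ∀ x : d, pr x = x → x ≠ 0 → 0 < B x x)
    (hneg : ∀ x : d, pr x = 0 → x ≠ 0 → B x x < 0)
    (N : d → d → d)
    (hN : ∀ x y z : d, B (N x y) z =
      - B ⁅pr x, y - pr y⁆ (z - pr z) - B ⁅x - pr x, pr y⁆ (pr z)
      - (1/3 : ℝ) * B ⁅pr x, pr y⁆ (pr z)
      - (1/3 : ℝ) * B ⁅x - pr x, y - pr y⁆ (z - pr z)) :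
    ∀ x y z : d, B (N x y - N y x + ⁅x, y⁆) z + B (N z x) y = 0 := by
  have skew : ∀ u v w : d, B ⁅u, v⁆ w = - B ⁅v, u⁆ w := by
    intro u v w
    rw [← lie_skew u v, map_neg, LinearMap.neg_apply]
  have cyc : ∀ u v w : d, B ⁅u, v⁆ w = B ⁅w, u⁆ v := by
    intro u v w
    have h := hinv u v w
    have : B ⁅u, v⁆ w = - B v ⁅u, w⁆ := by linarith
    rw [this, hsymm v ⁅u, w⁆, skew u w v]
    ring
  intro x y z
  -- abbreviations
  set a := pr x with ha
  set b := pr y with hb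
  set c := pr z with hc
  have hx : x = a + (x - a) := by abel
  have hy : y = b + (y - b) := by abel
  have hz : z = c + (z - c) := by abel
  have hbr : B ⁅x, y⁆ z =
      B ⁅a, b⁆ c + B ⁅a, b⁆ (z - c) + B ⁅a, y - b⁆ c + B ⁅a, y - b⁆ (z - c)
      + B ⁅x - a, b⁆ c + B ⁅x - a, b⁆ (z - c) + B ⁅x - a, y - b⁆ c
      + B ⁅x - a, y - b⁆ (z - c) := by
    conv_lhs => rw [hx, hy, hz]
    simp only [lie_add, add_lie, map_add, LinearMap.add_apply]
    ring
  simp only [map_sub, map_add, LinearMap.sub_apply, LinearMap.add_apply]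
  rw [hN x y z, hN y x z, hN z x y, hbr]
  simp only [← ha, ← hb, ← hc]
  linear_combination skew b (x - a) (z - c) + skew (y - b) a c
    + (1/3 : ℝ) * skew b a c + (1/3 : ℝ) * cyc a b c
    + (1/3 : ℝ) * skew (y - b) (x - a) (z - c)
    + (1/3 : ℝ) * cyc (x - a) (y - b) (z - c)
    + cyc a b (z - c) + cyc (x - a) (y - b) c
end

section
/- With ∇⁰ as above on a quadratic Lie algebra d, the divergence of ∇⁰ vanishes: for every y ∈ d, Σ_α ⟨∇⁰_{t_α} y, t^α⟩ = 0, where {t_α} is any basis of d and {t^α} the dual basis with respect to ⟨·,·⟩_d (i.e. the trace of the map x ↦ ∇⁰_x y, computed via the metric, is zero). -/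
/-!
Write `p` for the projection onto `E` and `q = 1 - p`, so that `x₊ = p x`, `x₋ = q x`. As a
function of `x`, `∇⁰_x y` is the endomorphism
`q ∘ ad y₋ ∘ p + p ∘ ad y₊ ∘ q + ⅓ (p ∘ ad y₊ ∘ p + q ∘ ad y₋ ∘ q)`,
and since `{t^α}` is dual to `{t_α}` the divergence is its trace. The off-diagonal blocks are
traceless because `tr (q g p) = tr (g p q)` and `p q = 0`. The diagonal blocks are skew-adjoint,
since `ad` is skew-adjoint by invariance and `p`, `q` are self-adjoint; and a skew-adjoint `f` for a
nondegenerate form is traceless: computing the trace in a basis and in its dual basis gives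
`tr f = -tr f`.
-/

open LinearMap (BilinForm trace IsSelfAdjoint IsSkewAdjoint)
open LieAlgebra (ad)

namespace LinearMap

theorem trace_eq_sum_repr_apply {R M ι : Type*} [CommRing R] [AddCommGroup M] [Module R M]
    [Fintype ι] [DecidableEq ι] (b : Module.Basis ι R M) (f : M →ₗ[R] M) :
    trace R M f = ∑ i, b.repr (f (b i)) i := by
  simp [trace_eq_matrix_trace R b, Matrix.trace, toMatrix_apply]

variable {K V : Type*} [Field K] [AddCommGroup V] [Module K V]

theorem trace_mul_mul_eq_zero_of_mul_eq_zero [FiniteDimensional K V] {p q : Module.End K V}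
    (hpq : p * q = 0) (g : Module.End K V) : trace K V (q * g * p) = 0 := by
  rw [mul_assoc, trace_mul_comm, mul_assoc, hpq, mul_zero, map_zero]

variable {B : BilinForm K V} {p : Module.End K V}

theorem IsSelfAdjoint.one_sub (hp : IsSelfAdjoint B p) : IsSelfAdjoint B ⇑(1 - p) := by
  intro x y
  simp [hp x y]

theorem IsSkewAdjoint.mul_mul_of_isSelfAdjoint {g : Module.End K V} (hg : IsSkewAdjoint B g)
    (hp : IsSelfAdjoint B p) : IsSkewAdjoint B ⇑(p * g * p) := by
  intro x y
  rw [Module.End.mul_apply, Module.End.mul_apply, hp, hg, hp]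
  simp

end LinearMap

namespace LinearMap.BilinForm

section DualFamily

variable {R M ι : Type*} [CommRing R] [AddCommGroup M] [Module R M] [DecidableEq ι]
  {B : BilinForm R M} {b : Module.Basis ι R M} {db : ι → M}

theorem apply_eq_repr_of_dual (hdb : ∀ i j, B (db i) (b j) = if i = j then 1 else 0)
    (i : ι) (v : M) : B (db i) v = b.repr v i := by
  change B (db i) v = b.coord i v
  congr 1
  refine b.ext fun j => ?_
  simp [hdb, Finsupp.single_apply, eq_comm]

theorem sum_apply_dual_eq_trace [Fintype ι]
    (hdb : ∀ i j, B (db i) (b j) = if i = j then 1 else 0) (f : M →ₗ[R] M) :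
    ∑ i, B (db i) (f (b i)) = trace R M f := by
  simp only [apply_eq_repr_of_dual hdb, trace_eq_sum_repr_apply b]

end DualFamily

variable {K V : Type*} [Field K] [AddCommGroup V] [Module K V] {B : BilinForm K V}

theorem trace_eq_zero_of_isSkewAdjoint [CharZero K] [FiniteDimensional K V]
    (hB : B.Nondegenerate) {f : V →ₗ[K] V} (hf : IsSkewAdjoint B f) : trace K V f = 0 := by
  let b := Module.finBasis K V
  let b' := B.dualBasis hB b
  have hdual : ∀ i j, B (b' i) (b j) = if i = j then 1 else 0 := fun i j => by
    simp only [b', apply_dualBasis_left, eq_comm]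
  have : trace K V f = -trace K V f := calc
    trace K V f = ∑ i, B (f (b' i)) (b i) := by
      simp only [trace_eq_sum_repr_apply b', b', dualBasis_repr_apply]
    _ = -∑ i, B (b' i) (f (b i)) := by
      simp only [hf _ _, Pi.neg_apply, map_neg, Finset.sum_neg_distrib]
    _ = -trace K V f := by rw [sum_apply_dual_eq_trace hdual]
  exact self_eq_neg.mp this

theorem IsSymm.isSelfAdjoint_of_orthogonal (hB : B.IsSymm) {p : Module.End K V}
    (horth : ∀ x y, B (p x) (y - p y) = 0) : IsSelfAdjoint B p := by
  intro x y
  have h₁ := horth x y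
  have h₂ := horth y x
  rw [map_sub, sub_eq_zero] at h₁ h₂
  rw [h₁, hB.eq x, h₂, hB.eq]

theorem lieInvariant.isSkewAdjoint_ad {L : Type*} [LieRing L] [LieAlgebra K L]
    {B : BilinForm K L} (hB : B.lieInvariant L) (x : L) : IsSkewAdjoint B (ad K L x) := by
  intro y z
  rw [LieAlgebra.ad_apply, hB, Pi.neg_apply, LieAlgebra.ad_apply, map_neg]

end LinearMap.BilinForm

open LinearMap.BilinForm

section Connection

variable {K L : Type*} [Field K] [LieRing L] [LieAlgebra K L]

/-- The endomorphism `x ↦ ∇⁰_x y`, where `p` is the projection onto `E`. -/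
def nablaZero (p : Module.End K L) (y : L) : Module.End K L :=
  (1 - p) * ad K L ((1 - p) y) * p + p * ad K L (p y) * (1 - p) +
    (3⁻¹ : K) • (p * ad K L (p y) * p + (1 - p) * ad K L ((1 - p) y) * (1 - p))

variable {B : BilinForm K L} {p : Module.End K L}

theorem apply_nablaZero (hp : IsSelfAdjoint B p) (x y z : L) :
    B (nablaZero p y x) z =
      - B ⁅p x, y - p y⁆ (z - p z) - B ⁅x - p x, p y⁆ (p z)
      - (1/3 : K) * B ⁅p x, p y⁆ (p z)
      - (1/3 : K) * B ⁅x - p x, y - p y⁆ (z - p z) := by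
  simp only [nablaZero, LinearMap.add_apply, LinearMap.smul_apply, Module.End.mul_apply,
    map_add, map_smul, smul_eq_mul, hp _ z, hp.one_sub _ z, LieAlgebra.ad_apply]
  rw [← lie_skew (p x), ← lie_skew (x - p x), ← lie_skew (p x) (p y),
    ← lie_skew (x - p x) (y - p y)]
  simp only [LinearMap.sub_apply, Module.End.one_apply, map_neg, LinearMap.neg_apply]
  ring

theorem trace_nablaZero [CharZero K] [FiniteDimensional K L] (hnd : B.Nondegenerate)
    (hB : B.lieInvariant L) (hp : IsSelfAdjoint B p) (hproj : p * p = p) (y : L) :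
    trace K L (nablaZero p y) = 0 := by
  have hpq : p * (1 - p) = 0 := by rw [mul_sub, mul_one, hproj, sub_self]
  have hqp : (1 - p) * p = 0 := by rw [sub_mul, one_mul, hproj, sub_self]
  have hdiag : ∀ r : Module.End K L, IsSelfAdjoint B r → ∀ c, trace K L (r * ad K L c * r) = 0 :=
    fun r hr c => trace_eq_zero_of_isSkewAdjoint hnd
      ((hB.isSkewAdjoint_ad c).mul_mul_of_isSelfAdjoint hr)
  rw [nablaZero, map_add, map_add, map_smul, map_add,
    LinearMap.trace_mul_mul_eq_zero_of_mul_eq_zero hpq,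
    LinearMap.trace_mul_mul_eq_zero_of_mul_eq_zero hqp, hdiag p hp, hdiag _ hp.one_sub]
  simp

end Connection

theorem stmt_12_general {d : Type*} [LieRing d] [LieAlgebra ℝ d] [FiniteDimensional ℝ d]
    (B : LinearMap.BilinForm ℝ d)
    (hsymm : ∀ x y : d, B x y = B y x)
    (hnd : B.Nondegenerate)
    (hinv : ∀ x y z : d, B ⁅x, y⁆ z + B y ⁅x, z⁆ = 0)
    (pr : d →ₗ[ℝ] d) (hproj : ∀ x : d, pr (pr x) = pr x)
    (horth : ∀ x y : d, B (pr x) (y - pr y) = 0)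
    (N : d → d → d)
    (hN : ∀ x y z : d, B (N x y) z =
      - B ⁅pr x, y - pr y⁆ (z - pr z) - B ⁅x - pr x, pr y⁆ (pr z)
      - (1/3 : ℝ) * B ⁅pr x, pr y⁆ (pr z)
      - (1/3 : ℝ) * B ⁅x - pr x, y - pr y⁆ (z - pr z))
    {ι : Type*} [Fintype ι] [DecidableEq ι] (b : Module.Basis ι ℝ d) (db : ι → d)
    (hdb : ∀ i j : ι, B (db i) (b j) = if i = j then 1 else 0)
:
    ∀ y : d, ∑ i, B (N (b i) y) (db i) = 0 := by
  intro y
  have hp : IsSelfAdjoint B pr := IsSymm.isSelfAdjoint_of_orthogonal ⟨hsymm⟩ horth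
  have hB : B.lieInvariant d := fun x y z => eq_neg_of_add_eq_zero_left (hinv x y z)
  calc ∑ i, B (N (b i) y) (db i) = ∑ i, B (db i) (nablaZero pr y (b i)) :=
        Finset.sum_congr rfl fun i _ => by rw [hN, ← apply_nablaZero hp, hsymm]
    _ = trace ℝ d (nablaZero pr y) := sum_apply_dual_eq_trace hdb _
    _ = 0 := trace_nablaZero hnd hB hp (LinearMap.ext hproj) y

/-- With `∇⁰` as above on a quadratic Lie algebra `d`, the
divergence of `∇⁰` vanishes: for every `y`, `Σ_α ⟨∇⁰_{t_α} y, t^α⟩ = 0`, where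
`{t_α}` is any basis of `d` and `{t^α}` the dual basis with respect to `⟨·,·⟩_d`. -/
theorem stmt_12 {d : Type*} [LieRing d] [LieAlgebra ℝ d] [FiniteDimensional ℝ d]
    (B : LinearMap.BilinForm ℝ d)
    (hsymm : ∀ x y : d, B x y = B y x)
    (hnd : B.Nondegenerate)
    (hinv : ∀ x y z : d, B ⁅x, y⁆ z + B y ⁅x, z⁆ = 0)
    (pr : d →ₗ[ℝ] d) (hproj : ∀ x : d, pr (pr x) = pr x)
    (horth : ∀ x y : d, B (pr x) (y - pr y) = 0)
    (hpos : ∀ x : d, pr x = x → x ≠ 0 → 0 < B x x)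
    (hneg : ∀ x : d, pr x = 0 → x ≠ 0 → B x x < 0)
    (N : d → d → d)
    (hN : ∀ x y z : d, B (N x y) z =
      - B ⁅pr x, y - pr y⁆ (z - pr z) - B ⁅x - pr x, pr y⁆ (pr z)
      - (1/3 : ℝ) * B ⁅pr x, pr y⁆ (pr z)
      - (1/3 : ℝ) * B ⁅x - pr x, y - pr y⁆ (z - pr z))
    {ι : Type*} [Fintype ι] [DecidableEq ι] (b : Module.Basis ι ℝ d) (db : ι → d)
    (hdb : ∀ i j : ι, B (db i) (b j) = if i = j then 1 else 0)
:
    ∀ y : d, ∑ i, B (N (b i) y) (db i) = 0 :=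
  stmt_12_general B hsymm hnd hinv pr hproj horth N hN b db hdb
end

section
/- Let E₀: g → g* and Π*: g → g* be linear maps with E₀ + Π* invertible, and set Ẽ := (E₀ + Π*)^{-1}: g* → g. Write E₀ = g₀ + B₀ and define B₀' := Π* + B₀ and B̃, g̃ as the skew and symmetric parts of Ẽ. Then g₀ ∘ g̃ + B₀' ∘ B̃ = id_{g*} and B̃ = −g₀^{-1} ∘ B₀' ∘ g̃, and consequently g̃ − B̃ g̃^{-1} B̃ = g₀^{-1} (as maps g* → g), provided g₀ and g̃ are invertible and Π* is skew-symmetric. -/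
/-- Let `E₀ = g₀ + B₀ : g → g*` and `Π* : g → g*` with `E₀ + Π*`
invertible, and let `Ẽ = (E₀ + Π*)⁻¹ = g̃ + B̃ : g* → g` (symmetric part `g̃`, skew
part `B̃`).  Then, with `B₀' := Π* + B₀`, and provided `g₀` and `g̃` are invertible
and `Π*` is skew: `g₀∘g̃ + B₀'∘B̃ = id`, `B̃ = −g₀⁻¹∘B₀'∘g̃`, and consequently
`g̃ − B̃ g̃⁻¹ B̃ = g₀⁻¹`. -/
theorem stmt_16 {V : Type*} [AddCommGroup V] [Module ℝ V]
    (g0 B0 P : V →ₗ[ℝ] Module.Dual ℝ V)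
    (hg0sym : ∀ x y : V, g0 x y = g0 y x)
    (hB0skew : ∀ x y : V, B0 x y = - B0 y x)
    (hPskew : ∀ x y : V, P x y = - P y x)
    (g0inv : Module.Dual ℝ V →ₗ[ℝ] V)
    (hg0inv1 : ∀ ξ : Module.Dual ℝ V, g0 (g0inv ξ) = ξ)
    (hg0inv2 : ∀ x : V, g0inv (g0 x) = x)
    (gt Bt : Module.Dual ℝ V →ₗ[ℝ] V)
    (hgtsym : ∀ ξ η : Module.Dual ℝ V, η (gt ξ) = ξ (gt η))
    (hBtskew : ∀ ξ η : Module.Dual ℝ V, η (Bt ξ) = - ξ (Bt η))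
    (gtinv : V →ₗ[ℝ] Module.Dual ℝ V)
    (hgtinv1 : ∀ x : V, gt (gtinv x) = x)
    (hgtinv2 : ∀ ξ : Module.Dual ℝ V, gtinv (gt ξ) = ξ)
    (hinv1 : ∀ ξ : Module.Dual ℝ V, (g0 + B0 + P) ((gt + Bt) ξ) = ξ)
    (hinv2 : ∀ x : V, (gt + Bt) ((g0 + B0 + P) x) = x) :
    (∀ ξ : Module.Dual ℝ V, g0 (gt ξ) + (P + B0) (Bt ξ) = ξ)
    ∧ (∀ ξ : Module.Dual ℝ V, Bt ξ = - g0inv ((P + B0) (gt ξ)))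
    ∧ (∀ ξ : Module.Dual ℝ V, gt ξ - Bt (gtinv (Bt ξ)) = g0inv ξ) := by
  -- pointwise expansion of hinv1
  have e1 : ∀ (ξ : Module.Dual ℝ V) (x : V),
      g0 (gt ξ) x + g0 (Bt ξ) x + B0 (gt ξ) x + B0 (Bt ξ) x
        + P (gt ξ) x + P (Bt ξ) x = ξ x := by
    intro ξ x
    have h : ((g0 + B0 + P) ((gt + Bt) ξ)) x = ξ x := by rw [hinv1]
    simp only [LinearMap.add_apply, map_add] at h
    linarith
  -- pointwise expansion of hinv2, transposed
  have e2 : ∀ (ξ : Module.Dual ℝ V) (x : V),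
      g0 (gt ξ) x - B0 (gt ξ) x - P (gt ξ) x
        - g0 (Bt ξ) x + B0 (Bt ξ) x + P (Bt ξ) x = ξ x := by
    intro ξ x
    have h : ξ ((gt + Bt) ((g0 + B0 + P) x)) = ξ x := by rw [hinv2]
    simp only [LinearMap.add_apply, map_add] at h
    rw [hgtsym (g0 x) ξ, hgtsym (B0 x) ξ, hgtsym (P x) ξ,
        hBtskew (g0 x) ξ, hBtskew (B0 x) ξ, hBtskew (P x) ξ,
        hg0sym x (gt ξ), hB0skew x (gt ξ), hPskew x (gt ξ),
        hg0sym x (Bt ξ), hB0skew x (Bt ξ), hPskew x (Bt ξ)] at h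
    linarith
  -- symmetric part
  have part1 : ∀ ξ : Module.Dual ℝ V, g0 (gt ξ) + (P + B0) (Bt ξ) = ξ := by
    intro ξ
    ext x
    have := e1 ξ x
    have := e2 ξ x
    simp only [LinearMap.add_apply]
    linarith
  -- skew part
  have hskew : ∀ ξ : Module.Dual ℝ V, g0 (Bt ξ) = - (P + B0) (gt ξ) := by
    intro ξ
    ext x
    have := e1 ξ x
    have := e2 ξ x
    simp only [LinearMap.add_apply, LinearMap.neg_apply]
    linarith
  have part2 : ∀ ξ : Module.Dual ℝ V, Bt ξ = - g0inv ((P + B0) (gt ξ)) := by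
    intro ξ
    have := congrArg g0inv (hskew ξ)
    rw [hg0inv2, map_neg] at this
    exact this
  refine ⟨part1, part2, ?_⟩
  intro ξ
  have h3 : g0 (gt ξ - Bt (gtinv (Bt ξ))) = ξ := by
    rw [map_sub, hskew (gtinv (Bt ξ)), hgtinv1, sub_neg_eq_add]
    exact part1 ξ
  calc gt ξ - Bt (gtinv (Bt ξ))
      = g0inv (g0 (gt ξ - Bt (gtinv (Bt ξ)))) := (hg0inv2 _).symm
    _ = g0inv ξ := by rw [h3]
end
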